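/- arXiv:2409.17150 — 5 statements merged into one kernel-verified Lean document; each statement's English description precedes it below -/
import Mathlib

section
/- Let p, q, r be nonzero vectors in ℝ³ and consider the symmetric matrices p·pᵀ, q·qᵀ, r·rᵀ: if c₁·p·pᵀ + c₂·q·qᵀ + c₃·r·rᵀ = 0 with c₁, c₂, c₃ all nonzero, then p, q, r are pairwise linearly dependent (represent the same line). -/
open Matrix

lemma cross_aux (c₁ c₂ c₃ : ℝ) (p q r : Fin 3 → ℝ)
    (E : ∀ i j, c₁ * (p i * p j) + c₂ * (q i * q j) + c₃ * (r i * r j) = 0)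
    (hc : c₁ * c₂ ≠ 0) : ∀ i j, p i * q j = p j * q i := by
  intro i j
  have h1 := E i i
  have h2 := E j j
  have h3 := E i j
  have h12 := congrArg₂ (· * ·) h1 h2
  have h33 := congrArg₂ (· * ·) h3 h3
  have key : c₁ * c₂ * (p i * q j - p j * q i) ^ 2 = 0 := by
    linear_combination h12 - h33 - c₃ * (r i)^2 * h2 - c₃ * (r j)^2 * h1
      + 2 * c₃ * (r i) * (r j) * h3
  have := (mul_eq_zero.mp key).resolve_left hc
  have := pow_eq_zero_iff (n := 2) (by norm_num) |>.mp this
  linarith [sub_eq_zero.mp this]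

lemma prop_aux (p q : Fin 3 → ℝ) (hp : p ≠ 0)
    (hx : ∀ i j, p i * q j = p j * q i) : ∃ a : ℝ, q = a • p := by
  obtain ⟨k, hk⟩ : ∃ k, p k ≠ 0 := by
    by_contra hco
    push_neg at hco
    exact hp (funext fun i => hco i)
  refine ⟨q k / p k, funext fun i => ?_⟩
  have h := hx k i
  have : q i = q k / p k * p i := by field_simp; linear_combination h
  simpa [Pi.smul_apply, smul_eq_mul] using this

/-- If c₁·p·pᵀ + c₂·q·qᵀ + c₃·r·rᵀ = 0 with all cᵢ ≠ 0 and p, q, r nonzero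
vectors in ℝ³, then p, q, r are pairwise linearly dependent (represent the
same line in RP²). -/
theorem rank_one_dependence_pairwise_proportional
    (p q r : Fin 3 → ℝ) (hp : p ≠ 0) (hq : q ≠ 0) (hr : r ≠ 0)
    (c₁ c₂ c₃ : ℝ) (hc₁ : c₁ ≠ 0) (hc₂ : c₂ ≠ 0) (hc₃ : c₃ ≠ 0)
    (h : c₁ • vecMulVec p p + c₂ • vecMulVec q q + c₃ • vecMulVec r r = 0) :
    (∃ a : ℝ, q = a • p) ∧ (∃ b : ℝ, r = b • p) ∧ (∃ c : ℝ, r = c • q) := by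
  have E : ∀ i j, c₁ * (p i * p j) + c₂ * (q i * q j) + c₃ * (r i * r j) = 0 := by
    intro i j
    have := congrFun (congrFun h i) j
    simpa [Matrix.add_apply, Matrix.smul_apply, vecMulVec_apply, smul_eq_mul] using this
  have Epr : ∀ i j, c₁ * (p i * p j) + c₃ * (r i * r j) + c₂ * (q i * q j) = 0 := by
    intro i j; linear_combination E i j
  have Eqr : ∀ i j, c₂ * (q i * q j) + c₃ * (r i * r j) + c₁ * (p i * p j) = 0 := by
    intro i j; linear_combination E i j
  refine ⟨prop_aux p q hp (cross_aux c₁ c₂ c₃ p q r E (mul_ne_zero hc₁ hc₂)),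
    prop_aux p r hp (cross_aux c₁ c₃ c₂ p r q Epr (mul_ne_zero hc₁ hc₃)),
    prop_aux q r hq (cross_aux c₂ c₃ c₁ q r p Eqr (mul_ne_zero hc₂ hc₃))⟩
end

section
/- If three conics are pairwise in double contact with concurrent chords of contact, and one of them is regular, then all three lie in a common double contact pencil. Precisely: if A, B, C are symmetric 3×3 matrices with A invertible, and B − A = c₁·p·pᵀ, C − B = c₂·q·qᵀ, A − λC = c₃·r·rᵀ for nonzero scalars cᵢ, λ and nonzero vectors p, q, r ∈ ℝ³ all annihilating a common nonzero vector v (i.e. pᵀv = qᵀv = rᵀv = 0), then p, q, r are pairwise proportional. -/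
open Matrix

private lemma vmv_mulVec (w x : Fin 3 → ℝ) :
    vecMulVec w w *ᵥ x = (w ⬝ᵥ x) • w := by
  ext i
  simp [mulVec, vecMulVec, dotProduct, Finset.mul_sum, mul_comm, mul_left_comm]

private lemma two_term {s t : ℝ} {u w : Fin 3 → ℝ} (ht : t ≠ 0)
    (h : s • u + t • w = 0) : w = (-s / t) • u := by
  have h1 : t • w = (-s) • u := by
    rw [neg_smul, eq_neg_iff_add_eq_zero, add_comm]; exact h
  calc w = t⁻¹ • (t • w) := (inv_smul_smul₀ ht w).symm
    _ = t⁻¹ • ((-s) • u) := by rw [h1]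
    _ = (-s / t) • u := by rw [smul_smul, div_eq_inv_mul]

private lemma self_dot_ne {w : Fin 3 → ℝ} (hw : w ≠ 0) : w ⬝ᵥ w ≠ 0 :=
  fun h => hw (dotProduct_self_eq_zero.mp h)

private lemma q_prop_p {c₁ c₂ c₃ : ℝ} {p q r : Fin 3 → ℝ}
    (hc₁ : c₁ ≠ 0) (hc₂ : c₂ ≠ 0) (hc₃ : c₃ ≠ 0)
    (hp : p ≠ 0) (hq : q ≠ 0) (hr : r ≠ 0)
    (key : ∀ x, (c₁ * (p ⬝ᵥ x)) • p + (c₂ * (q ⬝ᵥ x)) • q + (c₃ * (r ⬝ᵥ x)) • r = 0) :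
    ∃ a : ℝ, q = a • p := by
  set x : Fin 3 → ℝ := (p ⬝ᵥ p) • q - (p ⬝ᵥ q) • p with hxdef
  have hpx : p ⬝ᵥ x = 0 := by
    simp [hxdef, dotProduct_sub, dotProduct_smul, smul_eq_mul]
    ring
  by_cases hqx : q ⬝ᵥ x = 0
  · have hxx : x ⬝ᵥ x = 0 := by
      nth_rewrite 1 [hxdef]
      simp [sub_dotProduct, smul_dotProduct, hqx, hpx]
    have hx0 : x = 0 := dotProduct_self_eq_zero.mp hxx
    have hppne : p ⬝ᵥ p ≠ 0 := self_dot_ne hp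
    have heq : (p ⬝ᵥ p) • q = (p ⬝ᵥ q) • p := by
      rwa [hxdef, sub_eq_zero] at hx0
    refine ⟨(p ⬝ᵥ q) / (p ⬝ᵥ p), ?_⟩
    calc q = (p ⬝ᵥ p)⁻¹ • ((p ⬝ᵥ p) • q) := (inv_smul_smul₀ hppne q).symm
      _ = (p ⬝ᵥ p)⁻¹ • ((p ⬝ᵥ q) • p) := by rw [heq]
      _ = _ := by rw [smul_smul, div_eq_inv_mul]
  · -- q ⬝ᵥ x ≠ 0 : q is proportional to r
    have hk := key x
    rw [hpx, mul_zero, zero_smul, zero_add] at hk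
    have hrx : r ⬝ᵥ x ≠ 0 := by
      intro h0
      rw [h0, mul_zero, zero_smul, add_zero, smul_eq_zero] at hk
      rcases hk with h | h
      · exact (mul_ne_zero hc₂ hqx) h
      · exact hq h
    rw [add_comm] at hk
    have hqr : q = (-(c₃ * (r ⬝ᵥ x)) / (c₂ * (q ⬝ᵥ x))) • r :=
      two_term (mul_ne_zero hc₂ hqx) hk
    -- symmetric construction to get r proportional to p
    set y : Fin 3 → ℝ := (q ⬝ᵥ q) • p - (q ⬝ᵥ p) • q with hydef
    have hqy : q ⬝ᵥ y = 0 := by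
      simp [hydef, dotProduct_sub, dotProduct_smul, smul_eq_mul]
      ring
    by_cases hpy : p ⬝ᵥ y = 0
    · have hyy : y ⬝ᵥ y = 0 := by
        nth_rewrite 1 [hydef]
        simp [sub_dotProduct, smul_dotProduct, hqy, hpy]
      have hy0 : y = 0 := dotProduct_self_eq_zero.mp hyy
      have hqqne : q ⬝ᵥ q ≠ 0 := self_dot_ne hq
      have heq : (q ⬝ᵥ q) • p = (q ⬝ᵥ p) • q := by
        rwa [hydef, sub_eq_zero] at hy0
      have hpq : p = ((q ⬝ᵥ p) / (q ⬝ᵥ q)) • q := by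
        calc p = (q ⬝ᵥ q)⁻¹ • ((q ⬝ᵥ q) • p) := (inv_smul_smul₀ hqqne p).symm
          _ = (q ⬝ᵥ q)⁻¹ • ((q ⬝ᵥ p) • q) := by rw [heq]
          _ = _ := by rw [smul_smul, div_eq_inv_mul]
      obtain ⟨b, hpq⟩ : ∃ b : ℝ, p = b • q := ⟨_, hpq⟩
      have hbne : b ≠ 0 := by
        intro h0; rw [h0, zero_smul] at hpq; exact hp hpq
      refine ⟨b⁻¹, ?_⟩
      rw [hpq, smul_smul, inv_mul_cancel₀ hbne, one_smul]
    · have hk2 := key y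
      rw [hqy, mul_zero, zero_smul] at hk2
      have hk2' : (c₁ * (p ⬝ᵥ y)) • p + (c₃ * (r ⬝ᵥ y)) • r = 0 := by
        rw [← hk2]; abel
      have hry : r ⬝ᵥ y ≠ 0 := by
        intro h0
        rw [h0, mul_zero, zero_smul, add_zero, smul_eq_zero] at hk2'
        rcases hk2' with h | h
        · exact (mul_ne_zero hc₁ hpy) h
        · exact hp h
      obtain ⟨α, hqr'⟩ : ∃ α : ℝ, q = α • r := ⟨_, hqr⟩
      obtain ⟨β, hrp⟩ : ∃ β : ℝ, r = β • p :=
        ⟨_, two_term (mul_ne_zero hc₃ hry) hk2'⟩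
      exact ⟨α * β, by rw [hqr', hrp, smul_smul]⟩

/-- Three conics pairwise in double contact with concurrent chords of contact,
one of them regular, lie in a common double contact pencil: the chords of
contact are pairwise proportional. -/
theorem concurrent_double_contact_triangle
    (A B C : Matrix (Fin 3) (Fin 3) ℝ)
    (hA : A.IsSymm) (hB : B.IsSymm) (hC : C.IsSymm)
    (hAinv : IsUnit A.det)
    (p q r v : Fin 3 → ℝ) (hp : p ≠ 0) (hq : q ≠ 0) (hr : r ≠ 0) (hv : v ≠ 0)
    (c₁ c₂ c₃ lam : ℝ) (hc₁ : c₁ ≠ 0) (hc₂ : c₂ ≠ 0) (hc₃ : c₃ ≠ 0)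
    (hlam : lam ≠ 0)
    (h1 : B - A = c₁ • vecMulVec p p)
    (h2 : C - B = c₂ • vecMulVec q q)
    (h3 : A - lam • C = c₃ • vecMulVec r r)
    (hpv : p ⬝ᵥ v = 0) (hqv : q ⬝ᵥ v = 0) (hrv : r ⬝ᵥ v = 0) :
    (∃ a : ℝ, q = a • p) ∧ (∃ b : ℝ, r = b • p) ∧ (∃ c : ℝ, r = c • q) := by
  -- Step 1: lam = 1
  have hBv : B *ᵥ v = A *ᵥ v := by
    have h := congrArg (fun M => M *ᵥ v) h1
    simp only [sub_mulVec, smul_mulVec, vmv_mulVec, hpv, zero_smul, smul_zero] at h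
    exact sub_eq_zero.mp h
  have hCv : C *ᵥ v = B *ᵥ v := by
    have h := congrArg (fun M => M *ᵥ v) h2
    simp only [sub_mulVec, smul_mulVec, vmv_mulVec, hqv, zero_smul, smul_zero] at h
    exact sub_eq_zero.mp h
  have hACv : A *ᵥ v = lam • (A *ᵥ v) := by
    have h := congrArg (fun M => M *ᵥ v) h3
    simp only [sub_mulVec, smul_mulVec, vmv_mulVec, hrv, zero_smul, smul_zero] at h
    rw [hCv, hBv] at h
    exact sub_eq_zero.mp h
  have hAvne : A *ᵥ v ≠ 0 := by
    intro h0
    have hinj := mulVec_injective_iff_isUnit.mpr ((isUnit_iff_isUnit_det A).mpr hAinv)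
    exact hv (hinj (by rw [h0, mulVec_zero]))
  have hlam1 : lam = 1 := by
    by_contra hne
    have hz : (1 - lam) • (A *ᵥ v) = 0 := by
      rw [sub_smul, one_smul, sub_eq_zero]; exact hACv
    rcases smul_eq_zero.mp hz with h | h
    · exact hne (sub_eq_zero.mp h).symm
    · exact hAvne h
  rw [hlam1, one_smul] at h3
  -- Step 2: the three rank-one pieces sum to zero
  have hsum : c₁ • vecMulVec p p + c₂ • vecMulVec q q + c₃ • vecMulVec r r = 0 := by
    rw [← h1, ← h2, ← h3]; abel
  have key : ∀ x, (c₁ * (p ⬝ᵥ x)) • p + (c₂ * (q ⬝ᵥ x)) • q + (c₃ * (r ⬝ᵥ x)) • r = 0 := by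
    intro x
    have h := congrArg (fun M => M *ᵥ x) hsum
    simpa [add_mulVec, smul_mulVec, vmv_mulVec, smul_smul, zero_mulVec] using h
  -- Step 3: q is proportional to p
  obtain ⟨a, ha⟩ := q_prop_p hc₁ hc₂ hc₃ hp hq hr key
  have hane : a ≠ 0 := by intro h0; rw [h0, zero_smul] at ha; exact hq ha
  -- Step 4: r is proportional to p
  have hk := key r
  rw [ha] at hk
  have e1 : (c₂ * ((a • p) ⬝ᵥ r)) • (a • p) = ((c₂ * a * a) * (p ⬝ᵥ r)) • p := by
    rw [smul_dotProduct, smul_smul, smul_eq_mul]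
    congr 1
    ring
  rw [e1] at hk
  have hk2 : ((c₁ + c₂ * a * a) * (p ⬝ᵥ r)) • p + (c₃ * (r ⬝ᵥ r)) • r = 0 := by
    rw [show (c₁ + c₂ * a * a) * (p ⬝ᵥ r)
        = c₁ * (p ⬝ᵥ r) + (c₂ * a * a) * (p ⬝ᵥ r) from by ring, add_smul]
    exact hk
  have hrrne : r ⬝ᵥ r ≠ 0 := self_dot_ne hr
  obtain ⟨b, hb⟩ : ∃ b : ℝ, r = b • p := ⟨_, two_term (mul_ne_zero hc₃ hrrne) hk2⟩
  refine ⟨⟨a, ha⟩, ⟨b, hb⟩, ⟨b * a⁻¹, ?_⟩⟩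
  rw [hb, ha, smul_smul]
  congr 1
  field_simp
end

section
/- The eighth Penrose conic formula: let S₀ be a symmetric 3×3 matrix, p, q, r ∈ ℝ³, a, b, c ∈ ℝ, and define T⁰ := (1 − a² − b² − 2abc − c²)·S₀ + (1 − a²)·p·pᵀ + (1 − b²)·q·qᵀ + (1 − c²)·r·rᵀ + (a + bc)·(q·rᵀ + r·qᵀ) + (b + ac)·(p·rᵀ + r·pᵀ) + (c + ab)·(p·qᵀ + q·pᵀ), and S₁ := (1 − a²)·S₀ + q·qᵀ + a·(q·rᵀ + r·qᵀ) + r·rᵀ. Then (1 − a²)·T⁰ − (1 − a² − b² − 2abc − c²)·S₁ = m·mᵀ, where m := (1 − a²)·p + (c + ab)·q + (b + ac)·r. In particular T⁰ and S₁ are in double contact whenever m ≠ 0. -/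
open Matrix

/-- The eighth Penrose conic formula: with
T⁰ = (1−a²−b²−2abc−c²)·S₀ + (1−a²)·p·pᵀ + (1−b²)·q·qᵀ + (1−c²)·r·rᵀ
     + (a+bc)·(q·rᵀ+r·qᵀ) + (b+ac)·(p·rᵀ+r·pᵀ) + (c+ab)·(p·qᵀ+q·pᵀ)
and S₁ = (1−a²)·S₀ + q·qᵀ + a·(q·rᵀ+r·qᵀ) + r·rᵀ, one has
(1−a²)·T⁰ − (1−a²−b²−2abc−c²)·S₁ = m·mᵀ where
m = (1−a²)·p + (c+ab)·q + (b+ac)·r; in particular T⁰ and S₁ are in double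
contact whenever m ≠ 0. -/
theorem penrose_T0_S1_double_contact
    (S₀ : Matrix (Fin 3) (Fin 3) ℝ) (hS₀ : S₀.IsSymm)
    (p q r : Fin 3 → ℝ) (a b c : ℝ)
    (T0 S1 : Matrix (Fin 3) (Fin 3) ℝ) (m : Fin 3 → ℝ)
    (hT0 : T0 = (1 - a ^ 2 - b ^ 2 - 2 * a * b * c - c ^ 2) • S₀
        + (1 - a ^ 2) • vecMulVec p p + (1 - b ^ 2) • vecMulVec q q
        + (1 - c ^ 2) • vecMulVec r r
        + (a + b * c) • (vecMulVec q r + vecMulVec r q)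
        + (b + a * c) • (vecMulVec p r + vecMulVec r p)
        + (c + a * b) • (vecMulVec p q + vecMulVec q p))
    (hS1 : S1 = (1 - a ^ 2) • S₀ + vecMulVec q q
        + a • (vecMulVec q r + vecMulVec r q) + vecMulVec r r)
    (hm : m = (1 - a ^ 2) • p + (c + a * b) • q + (b + a * c) • r) :
    (1 - a ^ 2) • T0 - (1 - a ^ 2 - b ^ 2 - 2 * a * b * c - c ^ 2) • S1
      = vecMulVec m m
    ∧ (m ≠ 0 → ∃ s t : ℝ, ¬(s = 0 ∧ t = 0) ∧
        s • T0 + t • S1 = vecMulVec m m) := by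
  have key : (1 - a ^ 2) • T0 - (1 - a ^ 2 - b ^ 2 - 2 * a * b * c - c ^ 2) • S1
      = vecMulVec m m := by
    subst hT0 hS1 hm
    ext i j
    simp [vecMulVec, Matrix.sub_apply, Matrix.add_apply, Matrix.smul_apply, smul_eq_mul,
      Pi.add_apply, Pi.smul_apply]
    ring
  refine ⟨key, fun hmne => ?_⟩
  refine ⟨1 - a ^ 2, -(1 - a ^ 2 - b ^ 2 - 2 * a * b * c - c ^ 2), ?_, by
    rw [neg_smul, ← sub_eq_add_neg, key]⟩
  rintro ⟨h1, h2⟩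
  have h0 : vecMulVec m m = 0 := by
    rw [← key, neg_eq_zero.mp h2, h1]; simp
  obtain ⟨i, hi⟩ := Function.ne_iff.mp hmne
  have := congrFun (congrFun h0 i) i
  simp [vecMulVec] at this
  exact hi (by simpa using this)
end

section
/- Double contact structure of the subset lattice: let S₀ be a quadratic form, p₁,…,pₙ linear forms, dᵢ and a_{ij} = a_{ji} scalars, and for Ω ⊆ {1,…,n} define S_Ω := det of the symmetric matrix with S₀ in the (0,0) corner, pᵢ in row/column 0 at positions i ∈ Ω, and the scalar block (dᵢ on the diagonal, a_{ij} off-diagonal) restricted to Ω. Define f_Ω as the determinant of the scalar block on Ω (with f_∅ = 1), and p_{Ω,k} as the determinant of the submatrix with rows Ω∪{k} and columns Ω∪{0}. Then for k ∉ Ω: f_{Ω∪{k}}·S_Ω − f_Ω·S_{Ω∪{k}} = (p_{Ω,k})². -/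
open Matrix Finset MvPolynomial

/-- Determinant of the submatrix of `M` with rows in `s` and columns in `t`,
each taken in increasing order (0 if the cardinalities differ). -/
noncomputable def minorDet {ι R : Type*} [Fintype ι] [DecidableEq ι] [LinearOrder ι]
    [CommRing R] (M : Matrix ι ι R) (s t : Finset ι) : R :=
  if h : t.card = s.card then
    (M.submatrix (s.orderEmbOfFin rfl) (t.orderEmbOfFin h)).det
  else 0

/-- The Penrose determinant matrix: (0,0)-entry the quadratic form `S₀`,
the remaining entries of row/column 0 the linear forms `pᵢ`, and the
remaining entries the scalars `A i j` (dᵢ on the diagonal, a_{ij} off). -/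
noncomputable def penroseMatrix (n : ℕ) (S₀ : MvPolynomial (Fin 3) ℝ)
    (p : Fin n → MvPolynomial (Fin 3) ℝ) (A : Matrix (Fin n) (Fin n) ℝ) :
    Matrix (Fin (n + 1)) (Fin (n + 1)) (MvPolynomial (Fin 3) ℝ) :=
  Matrix.of fun i j =>
    Fin.cases (Fin.cases S₀ (fun j' => p j') j)
      (fun i' => Fin.cases (p i') (fun j' => C (A i' j')) j) i

/-- The subset `Γ ∪ {0}` of `Fin (n+1)`, where `Γ ⊆ {1,…,n}`. -/
def liftWithZero {n : ℕ} (Γ : Finset (Fin n)) : Finset (Fin (n + 1)) :=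
  insert 0 (Γ.image Fin.succ)


namespace PenroseAux

variable {R : Type*} [CommRing R]


section detP
variable {m : ℕ}

noncomputable def Pmat (u v : Fin (m+2) → R) (r : Fin (m+2)) : Matrix (Fin (m+2)) (Fin (m+2)) R :=
  Matrix.of fun t c => if c = 0 then u t else if c = r then v t else if t = c then 1 else 0

theorem perm_eq_of_fix (r : Fin (m+2)) (hr : r ≠ 0) (σ : Equiv.Perm (Fin (m+2)))
    (hfix : ∀ c : Fin (m+2), c ≠ 0 → c ≠ r → σ c = c) :
    σ = 1 ∨ σ = Equiv.swap 0 r := by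
  have h0 : σ 0 = 0 ∨ σ 0 = r := by
    by_contra h
    push_neg at h
    exact h.1 (σ.injective (hfix (σ 0) h.1 h.2))
  have hrv : σ r = 0 ∨ σ r = r := by
    by_contra h
    push_neg at h
    exact h.2 (σ.injective (hfix (σ r) h.1 h.2))
  rcases h0 with h0 | h0
  · left
    have hrr : σ r = r := by
      rcases hrv with h2 | h2
      · exact absurd (σ.injective (h2.trans h0.symm)) hr
      · exact h2
    ext c
    by_cases hc0 : c = 0
    · simp [hc0, h0]
    by_cases hcr : c = r
    · simp [hcr, hrr]
    · simp [hfix c hc0 hcr]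
  · right
    have hrr : σ r = 0 := by
      rcases hrv with h2 | h2
      · exact h2
      · exact absurd (σ.injective (h0.trans h2.symm)) (Ne.symm hr)
    ext c
    by_cases hc0 : c = 0
    · rw [hc0, h0, Equiv.swap_apply_left]
    by_cases hcr : c = r
    · rw [hcr, hrr, Equiv.swap_apply_right]
    · rw [Equiv.swap_apply_of_ne_of_ne hc0 hcr]
      exact congrArg Fin.val (hfix c hc0 hcr)

theorem det_Pmat (u v : Fin (m+2) → R) (r : Fin (m+2)) (hr : r ≠ 0) :
    (Pmat u v r).det = u 0 * v r - u r * v 0 := by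
  classical
  rw [Matrix.det_apply]
  rw [← Finset.sum_subset (Finset.subset_univ ({1, Equiv.swap 0 r} : Finset (Equiv.Perm (Fin (m+2)))))]
  · have hne : (1 : Equiv.Perm (Fin (m+2))) ≠ Equiv.swap 0 r := by
      intro h
      have h2 : (1 : Equiv.Perm (Fin (m+2))) 0 = Equiv.swap 0 r 0 := by rw [h]
      rw [Equiv.swap_apply_left] at h2
      exact hr (by simpa using h2.symm)
    rw [Finset.sum_pair hne]
    have h1 : ∀ σ : Equiv.Perm (Fin (m+2)),
        (∏ c, Pmat u v r (σ c) c) =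
        (∏ c ∈ (univ \ {0, r}), Pmat u v r (σ c) c) * (Pmat u v r (σ 0) 0 * Pmat u v r (σ r) r) := by
      intro σ
      rw [← Finset.prod_sdiff (Finset.subset_univ ({0, r} : Finset (Fin (m+2))))]
      rw [Finset.prod_pair (Ne.symm hr)]
    rw [h1, h1]
    have hid : ∀ c ∈ (univ \ ({0, r} : Finset (Fin (m+2)))),
        Pmat u v r ((1 : Equiv.Perm (Fin (m+2))) c) c = 1 := by
      intro c hc
      simp only [Finset.mem_sdiff, Finset.mem_insert, Finset.mem_singleton, not_or] at hc
      simp [Pmat, hc.2.1, hc.2.2]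
    have hsw : ∀ c ∈ (univ \ ({0, r} : Finset (Fin (m+2)))),
        Pmat u v r (Equiv.swap 0 r c) c = 1 := by
      intro c hc
      simp only [Finset.mem_sdiff, Finset.mem_insert, Finset.mem_singleton, not_or] at hc
      rw [Equiv.swap_apply_of_ne_of_ne hc.2.1 hc.2.2]
      simp [Pmat, hc.2.1, hc.2.2]
    rw [Finset.prod_congr rfl hid, Finset.prod_congr rfl hsw]
    simp [Pmat, Equiv.swap_apply_left, Equiv.swap_apply_right, hr, Ne.symm hr]
    ring
  · intro σ _ hσ
    simp only [Finset.mem_insert, Finset.mem_singleton, not_or] at hσ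
    have : ∃ c : Fin (m+2), c ≠ 0 ∧ c ≠ r ∧ σ c ≠ c := by
      by_contra hcon
      push_neg at hcon
      rcases perm_eq_of_fix r hr σ (fun c h1 h2 => hcon c h1 h2) with h | h
      · exact hσ.1 h
      · exact hσ.2 h
    obtain ⟨c, hc0, hcr, hcfix⟩ := this
    rw [Finset.prod_eq_zero (Finset.mem_univ c) (by simp [Pmat, hc0, hcr, hcfix])]
    simp

end detP

section dj
variable {m : ℕ}

noncomputable def Qmat (M : Matrix (Fin (m+2)) (Fin (m+2)) R) (r : Fin (m+2)) :
    Matrix (Fin (m+2)) (Fin (m+2)) R :=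
  Matrix.of fun t c =>
    if c = 0 then (if t = 0 then M.det else 0)
    else if c = r then (if t = r then M.det else 0)
    else M t c

theorem mul_P_eq_Q (M : Matrix (Fin (m+2)) (Fin (m+2)) R) (r : Fin (m+2)) (hr : r ≠ 0) :
    M * Pmat (fun t => M.adjugate t 0) (fun t => M.adjugate t r) r = Qmat M r := by
  have hadj := Matrix.mul_adjugate M
  ext t c
  rw [Matrix.mul_apply]
  by_cases hc0 : c = 0
  · subst hc0
    have hP : ∀ u, Pmat (fun t => M.adjugate t 0) (fun t => M.adjugate t r) r u (0 : Fin (m+2))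
        = M.adjugate u 0 := fun u => by simp [Pmat]
    simp only [hP]
    have h2 : ∑ u, M t u * M.adjugate u 0 = (M * M.adjugate) t 0 := (Matrix.mul_apply).symm
    rw [h2, hadj]
    simp [Qmat, Matrix.one_apply]
  by_cases hcr : c = r
  · subst hcr
    have hP : ∀ u, Pmat (fun t => M.adjugate t 0) (fun t => M.adjugate t c) c u c
        = M.adjugate u c := fun u => by simp [Pmat, hr]
    simp only [hP]
    have h2 : ∑ u, M t u * M.adjugate u c = (M * M.adjugate) t c := (Matrix.mul_apply).symm
    rw [h2, hadj]
    simp [Qmat, Matrix.one_apply, hr]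
  · have hP : ∀ u, Pmat (fun t => M.adjugate t 0) (fun t => M.adjugate t r) r u c
        = if u = c then 1 else 0 := fun u => by simp [Pmat, hc0, hcr]
    simp only [hP]
    rw [Finset.sum_eq_single c]
    · simp [Qmat, hc0, hcr]
    · intro u _ hu
      simp [hu]
    · simp

theorem det_Qmat (M : Matrix (Fin (m+2)) (Fin (m+2)) R) (s : Fin (m+1)) :
    (Qmat M s.succ).det
      = M.det * (M.det *
        (M.submatrix (Fin.succ ∘ s.succAbove) (Fin.succ ∘ s.succAbove)).det) := by
  have hQ00 : Qmat M s.succ 0 0 = M.det := by simp [Qmat]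
  have hQ0 : ∀ t : Fin (m+2), t ≠ 0 → Qmat M s.succ t 0 = 0 := by
    intro t ht; simp [Qmat, ht]
  rw [Matrix.det_succ_column (Qmat M s.succ) 0,
    Fintype.sum_eq_single (0 : Fin (m+2)) (fun t ht => by rw [hQ0 t ht]; ring)]
  rw [hQ00, Fin.succAbove_zero]
  set Q1 := (Qmat M s.succ).submatrix Fin.succ Fin.succ with hQ1def
  have hQ1s : Q1 s s = M.det := by simp [hQ1def, Qmat, Fin.succ_ne_zero]
  have hQ1 : ∀ t, t ≠ s → Q1 t s = 0 := by
    intro t ht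
    have h3 : (t.succ : Fin (m+2)) ≠ s.succ := fun h => ht (Fin.succ_injective _ h)
    simp [hQ1def, Qmat, Fin.succ_ne_zero, h3]
  rw [Matrix.det_succ_column Q1 s,
    Fintype.sum_eq_single s (fun t ht => by rw [hQ1 t ht]; ring), hQ1s]
  have h2 : Q1.submatrix s.succAbove s.succAbove
      = M.submatrix (Fin.succ ∘ s.succAbove) (Fin.succ ∘ s.succAbove) := by
    ext a b
    have hb : s.succAbove b ≠ s := Fin.succAbove_ne s b
    have hb2 : ((s.succAbove b).succ : Fin (m+2)) ≠ s.succ := fun h => hb (Fin.succ_injective _ h)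
    simp [hQ1def, Qmat, Fin.succ_ne_zero, hb2]
  rw [h2]
  have hsgn : ((-1 : R)) ^ ((s : ℕ) + (s : ℕ)) = 1 := by
    rw [← two_mul, pow_mul]
    norm_num
  rw [hsgn]
  simp

end dj

section djmain
variable {m : ℕ}

theorem dj_mul (M : Matrix (Fin (m+2)) (Fin (m+2)) R) (s : Fin (m+1)) :
    M.det * ((M.submatrix Fin.succ Fin.succ).det
        * (M.submatrix s.succ.succAbove s.succ.succAbove).det
      - (M.submatrix Fin.succ s.succ.succAbove).det
        * (M.submatrix s.succ.succAbove Fin.succ).det)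
    = M.det * (M.det
        * (M.submatrix (Fin.succ ∘ s.succAbove) (Fin.succ ∘ s.succAbove)).det) := by
  have h := congrArg Matrix.det (mul_P_eq_Q M s.succ (Fin.succ_ne_zero s))
  rw [Matrix.det_mul, det_Pmat _ _ _ (Fin.succ_ne_zero s), det_Qmat] at h
  rw [← h]
  congr 1
  rw [Matrix.adjugate_fin_succ_eq_det_submatrix, Matrix.adjugate_fin_succ_eq_det_submatrix,
    Matrix.adjugate_fin_succ_eq_det_submatrix, Matrix.adjugate_fin_succ_eq_det_submatrix]
  simp only [Fin.succAbove_zero, Fin.val_zero, add_zero, zero_add, pow_zero, one_mul]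
  have hsgn : ((-1 : R)) ^ ((s.succ : Fin (m+2)) : ℕ) * ((-1 : R)) ^ ((s.succ : Fin (m+2)) : ℕ)
      = 1 := by
    rw [← pow_add, ← two_mul, pow_mul]
    norm_num
  have hsgn2 : ((-1 : R)) ^ (((s.succ : Fin (m+2)) : ℕ) + ((s.succ : Fin (m+2)) : ℕ)) = 1 := by
    rw [← two_mul, pow_mul]
    norm_num
  rw [hsgn2, one_mul]
  linear_combination ((M.submatrix Fin.succ (Fin.succAbove s.succ)).det
    * (M.submatrix (Fin.succAbove s.succ) Fin.succ).det) * hsgn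

theorem desnanot_jacobi (M : Matrix (Fin (m+2)) (Fin (m+2)) R) (s : Fin (m+1)) :
    (M.submatrix Fin.succ Fin.succ).det * (M.submatrix s.succ.succAbove s.succ.succAbove).det
      - (M.submatrix Fin.succ s.succ.succAbove).det
        * (M.submatrix s.succ.succAbove Fin.succ).det
    = M.det * (M.submatrix (Fin.succ ∘ s.succAbove) (Fin.succ ∘ s.succAbove)).det := by
  classical
  set G : Matrix (Fin (m+2)) (Fin (m+2)) (MvPolynomial (Fin (m+2) × Fin (m+2)) ℤ) :=
    Matrix.of fun i j => MvPolynomial.X (i, j) with hG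
  have hGdet : G.det ≠ 0 := by
    intro h
    have h2 := congrArg (MvPolynomial.eval
      (fun q : Fin (m+2) × Fin (m+2) => if q.1 = q.2 then (1:ℤ) else 0)) h
    rw [map_zero] at h2
    rw [RingHom.map_det] at h2
    have h3 : G.map (MvPolynomial.eval
        (fun q : Fin (m+2) × Fin (m+2) => if q.1 = q.2 then (1:ℤ) else 0)) = 1 := by
      ext i j
      simp [hG, Matrix.one_apply]
    rw [RingHom.mapMatrix_apply, h3, Matrix.det_one] at h2
    exact one_ne_zero h2
  have hcancel := mul_left_cancel₀ hGdet (dj_mul G s)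
  let φ := MvPolynomial.eval₂Hom (Int.castRingHom R) (fun q : Fin (m+2) × Fin (m+2) => M q.1 q.2)
  have hmap : G.map φ = M := by
    ext i j
    simp [hG, φ]
  have h2 := congrArg φ hcancel
  simp only [_root_.map_mul, _root_.map_sub, RingHom.map_det, RingHom.mapMatrix_apply,
    ← Matrix.submatrix_map, hmap] at h2
  exact h2

end djmain


theorem minorDet_eq {ι S : Type*} [Fintype ι] [DecidableEq ι] [LinearOrder ι]
    [CommRing S] (M : Matrix ι ι S) (s t : Finset ι) {q : ℕ}
    (hs : s.card = q) (ht : t.card = q) (f g : Fin q → ι)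
    (hf : ∀ x, f x ∈ s) (hg : ∀ x, g x ∈ t) (hfm : StrictMono f) (hgm : StrictMono g) :
    minorDet M s t = (M.submatrix f g).det := by
  subst hs
  rw [minorDet, dif_pos ht]
  rw [← Finset.orderEmbOfFin_unique (rfl : s.card = s.card) hf hfm,
    ← Finset.orderEmbOfFin_unique ht hg hgm]

theorem penrose_symm (n : ℕ) (S₀ : MvPolynomial (Fin 3) ℝ)
    (p : Fin n → MvPolynomial (Fin 3) ℝ) (A : Matrix (Fin n) (Fin n) ℝ) (hA : A.IsSymm) :
    ∀ i j, penroseMatrix n S₀ p A i j = penroseMatrix n S₀ p A j i := by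
  intro i j
  induction i using Fin.cases with
  | zero =>
    induction j using Fin.cases with
    | zero => rfl
    | succ j' => rfl
  | succ i' =>
    induction j using Fin.cases with
    | zero => rfl
    | succ j' =>
      have h : A i' j' = A j' i' := by
        conv_lhs => rw [← hA]
        rfl
      simp [penroseMatrix, h]

end PenroseAux

/-- Double contact structure of the subset lattice:
f_{Ω∪{k}}·S_Ω − f_Ω·S_{Ω∪{k}} = (p_{Ω,k})², where S_Γ is the symmetric
subdeterminant of the Penrose matrix on rows and columns Γ∪{0}, f_Γ the
determinant of the scalar block on Γ (f_∅ = 1), and p_{Ω,k} the subdeterminant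
with rows Ω∪{k} and columns Ω∪{0}. -/
theorem penrose_subset_double_contact
    (n : ℕ) (S₀ : MvPolynomial (Fin 3) ℝ) (hS₀ : S₀.IsHomogeneous 2)
    (p : Fin n → MvPolynomial (Fin 3) ℝ) (hp : ∀ i, (p i).IsHomogeneous 1)
    (A : Matrix (Fin n) (Fin n) ℝ) (hA : A.IsSymm)
    (Ω : Finset (Fin n)) (k : Fin n) (hk : k ∉ Ω) :
    minorDet (penroseMatrix n S₀ p A) ((insert k Ω).image Fin.succ)
        ((insert k Ω).image Fin.succ)
      * minorDet (penroseMatrix n S₀ p A) (liftWithZero Ω) (liftWithZero Ω)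
    - minorDet (penroseMatrix n S₀ p A) (Ω.image Fin.succ) (Ω.image Fin.succ)
      * minorDet (penroseMatrix n S₀ p A) (liftWithZero (insert k Ω))
          (liftWithZero (insert k Ω))
    = (minorDet (penroseMatrix n S₀ p A)
        (insert k.succ (Ω.image Fin.succ)) (liftWithZero Ω)) ^ 2 := by
  classical
  set M := penroseMatrix n S₀ p A with hM
  have hsymm : ∀ i j, M i j = M j i := PenroseAux.penrose_symm n S₀ p A hA
  set m := Ω.card with hm
  have hinj : Function.Injective (Fin.succ : Fin n → Fin (n+1)) := Fin.succ_injective n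
  have h0not : ∀ Γ : Finset (Fin n), (0 : Fin (n+1)) ∉ Γ.image Fin.succ := by
    intro Γ h
    obtain ⟨x, -, hx⟩ := Finset.mem_image.1 h
    exact Fin.succ_ne_zero x hx
  have hcard_im : (Ω.image Fin.succ).card = m := Finset.card_image_of_injective _ hinj
  have hcard_imins : ((insert k Ω).image Fin.succ).card = m + 1 := by
    rw [Finset.card_image_of_injective _ hinj, Finset.card_insert_of_notMem hk]
  have hliftΩ : (liftWithZero Ω).card = m + 1 := by
    rw [liftWithZero, Finset.card_insert_of_notMem (h0not Ω), hcard_im]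
  have hbigcard : (liftWithZero (insert k Ω)).card = m + 2 := by
    rw [liftWithZero, Finset.card_insert_of_notMem (h0not _), hcard_imins]
  set big := liftWithZero (insert k Ω) with hbig
  set e : Fin (m+2) → Fin (n+1) := ⇑(big.orderEmbOfFin hbigcard) with he
  have he_mono : StrictMono e := (big.orderEmbOfFin hbigcard).strictMono
  have he_mem : ∀ x, e x ∈ big := fun x => Finset.orderEmbOfFin_mem big hbigcard x
  have hbig_eq : big = insert 0 (insert k.succ (Ω.image Fin.succ)) := by
    rw [hbig, liftWithZero, Finset.image_insert]
  have hrange : ∀ y ∈ big, ∃ x, e x = y := by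
    intro y hy
    have h2 : y ∈ Set.range e := by
      rw [he, Finset.range_orderEmbOfFin]
      exact Finset.mem_coe.mpr hy
    exact h2
  have he0 : e 0 = 0 := by
    refine le_antisymm ?_ (Fin.zero_le _)
    obtain ⟨t, ht⟩ := hrange 0 (by rw [hbig_eq]; exact Finset.mem_insert_self _ _)
    calc e 0 ≤ e t := he_mono.monotone (Fin.zero_le t)
    _ = 0 := ht
  obtain ⟨r, her⟩ : ∃ r, e r = k.succ :=
    hrange k.succ (by
      rw [hbig_eq]
      exact Finset.mem_insert_of_mem (Finset.mem_insert_self _ _))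
  have hr0 : r ≠ 0 := by
    intro h
    rw [h, he0] at her
    exact Fin.succ_ne_zero k her.symm
  obtain ⟨s, rfl⟩ : ∃ s : Fin (m+1), r = s.succ := by
    rcases Fin.eq_zero_or_eq_succ r with h | h
    · exact absurd h hr0
    · exact h
  set N := M.submatrix e e with hN
  have hmem1 : ∀ x : Fin (m+1), e (Fin.succ x) ∈ (insert k Ω).image Fin.succ := by
    intro x
    have h1 := he_mem (Fin.succ x)
    rw [hbig, liftWithZero] at h1
    rcases Finset.mem_insert.1 h1 with h | h
    · exfalso
      have hne : e (Fin.succ x) ≠ e 0 := fun hh => (Fin.succ_ne_zero x) (he_mono.injective hh)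
      rw [he0] at hne
      exact hne h
    · exact h
  have hmem2 : ∀ x : Fin (m+1), e (Fin.succAbove s.succ x) ∈ liftWithZero Ω := by
    intro x
    have h1 := he_mem (Fin.succAbove s.succ x)
    rw [hbig_eq] at h1
    have hne : e (Fin.succAbove s.succ x) ≠ k.succ := by
      rw [← her]
      exact fun hh => (Fin.succAbove_ne s.succ x) (he_mono.injective hh)
    rw [liftWithZero]
    rcases Finset.mem_insert.1 h1 with h | h
    · rw [h]
      exact Finset.mem_insert_self _ _
    · rcases Finset.mem_insert.1 h with h | h
      · exact absurd h hne
      · exact Finset.mem_insert_of_mem h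
  have hmem3 : ∀ x : Fin m, e (Fin.succ (Fin.succAbove s x)) ∈ Ω.image Fin.succ := by
    intro x
    have h1 := he_mem (Fin.succ (Fin.succAbove s x))
    rw [hbig_eq] at h1
    have hne0 : e (Fin.succ (Fin.succAbove s x)) ≠ 0 := by
      rw [← he0]
      exact fun hh => (Fin.succ_ne_zero _) (he_mono.injective hh)
    have hnek : e (Fin.succ (Fin.succAbove s x)) ≠ k.succ := by
      rw [← her]
      intro hh
      exact (Fin.succAbove_ne s x) (Fin.succ_injective _ (he_mono.injective hh))
    rcases Finset.mem_insert.1 h1 with h | h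
    · exact absurd h hne0
    rcases Finset.mem_insert.1 h with h | h
    · exact absurd h hnek
    · exact h
  have hm1 : StrictMono (fun x : Fin (m+1) => e (Fin.succ x)) :=
    he_mono.comp Fin.strictMono_succ
  have hm2 : StrictMono (fun x : Fin (m+1) => e (Fin.succAbove s.succ x)) :=
    he_mono.comp (Fin.strictMono_succAbove _)
  have hm3 : StrictMono (fun x : Fin m => e (Fin.succ (Fin.succAbove s x))) :=
    he_mono.comp (Fin.strictMono_succ.comp (Fin.strictMono_succAbove _))
  have E1 : minorDet M ((insert k Ω).image Fin.succ) ((insert k Ω).image Fin.succ)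
      = (N.submatrix Fin.succ Fin.succ).det :=
    PenroseAux.minorDet_eq M _ _ hcard_imins hcard_imins _ _ hmem1 hmem1 hm1 hm1
  have E2 : minorDet M (liftWithZero Ω) (liftWithZero Ω)
      = (N.submatrix (Fin.succAbove s.succ) (Fin.succAbove s.succ)).det :=
    PenroseAux.minorDet_eq M _ _ hliftΩ hliftΩ _ _ hmem2 hmem2 hm2 hm2
  have E3 : minorDet M (Ω.image Fin.succ) (Ω.image Fin.succ)
      = (N.submatrix (Fin.succ ∘ Fin.succAbove s) (Fin.succ ∘ Fin.succAbove s)).det :=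
    PenroseAux.minorDet_eq M _ _ hcard_im hcard_im _ _ hmem3 hmem3 hm3 hm3
  have E4 : minorDet M big big = N.det :=
    PenroseAux.minorDet_eq M _ _ hbigcard hbigcard _ _ he_mem he_mem he_mono he_mono
  have hins_eq : insert k.succ (Ω.image Fin.succ) = (insert k Ω).image Fin.succ :=
    (Finset.image_insert _ _ _).symm
  have E5 : minorDet M (insert k.succ (Ω.image Fin.succ)) (liftWithZero Ω)
      = (N.submatrix Fin.succ (Fin.succAbove s.succ)).det := by
    rw [hins_eq]
    exact PenroseAux.minorDet_eq M _ _ hcard_imins hliftΩ _ _ hmem1 hmem2 hm1 hm2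
  rw [E1, E2, E3, E4, E5]
  have hsym : (N.submatrix (Fin.succAbove s.succ) Fin.succ).det
      = (N.submatrix Fin.succ (Fin.succAbove s.succ)).det := by
    rw [← Matrix.det_transpose (N.submatrix Fin.succ (Fin.succAbove s.succ)),
      Matrix.transpose_submatrix]
    refine congrArg _ (Matrix.ext fun a b => ?_)
    simp only [Matrix.submatrix_apply, Matrix.transpose_apply, hN]
    exact hsymm (e (Fin.succAbove s.succ a)) (e (Fin.succ b))
  have hdj := PenroseAux.desnanot_jacobi N s
  linear_combination hdj + (N.submatrix Fin.succ (Fin.succAbove s.succ)).det * hsym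
end

section
/- Face conic identity: with the data of the Penrose determinant matrix (quadratic form S₀, linear forms pᵢ, scalars dᵢ, a_{ij}), define for Ω ⊆ {1,…,n} and j, k ∉ Ω the face conic H_{Ω,j,k} := det of the submatrix with rows Ω∪{0,j} and columns Ω∪{0,k}. Then S_{Ω∪{k}}·S_{Ω∪{j}} − S_Ω·S_{Ω∪{j,k}} = (H_{Ω,j,k})², where S_Γ denotes the symmetric subdeterminant on rows and columns Γ∪{0}. -/
open Matrix Finset MvPolynomial

/-! ### Desnanot–Jacobi identity -/

section DJ

variable {R : Type*} [CommRing R]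

/-- The equivalence splitting `Fin (m+2)` as the complement of `{a, b}` plus `{a, b}`,
where `b = a.succAbove b'`. -/
noncomputable def twoSplit {m : ℕ} (a : Fin (m + 2)) (b' : Fin (m + 1)) :
    (Fin m ⊕ Fin 2) ≃ Fin (m + 2) := by
  refine Equiv.ofBijective
    (Sum.elim (a.succAbove ∘ b'.succAbove) ![a, a.succAbove b']) ?_
  rw [Fintype.bijective_iff_injective_and_card]
  constructor
  · have hsa : ∀ x : Fin m, a.succAbove (b'.succAbove x) ≠ a :=
      fun x => Fin.succAbove_ne a _
    have hsb : ∀ x : Fin m, a.succAbove (b'.succAbove x) ≠ a.succAbove b' :=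
      fun x h => Fin.succAbove_ne b' x ((Fin.strictMono_succAbove a).injective h)
    rintro (x | x) (y | y) h
    · simp only [Sum.elim_inl, Function.comp_apply] at h
      exact congrArg Sum.inl
        (((Fin.strictMono_succAbove b').injective
          ((Fin.strictMono_succAbove a).injective h)))
    · exfalso
      simp only [Sum.elim_inl, Sum.elim_inr, Function.comp_apply] at h
      fin_cases y
      · exact hsa x (by simpa using h)
      · exact hsb x (by simpa using h)
    · exfalso
      simp only [Sum.elim_inl, Sum.elim_inr, Function.comp_apply] at h
      fin_cases x
      · exact hsa y (by simpa using h.symm)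
      · exact hsb y (by simpa using h.symm)
    · simp only [Sum.elim_inr] at h
      have hab : a ≠ a.succAbove b' := (Fin.succAbove_ne a b').symm
      fin_cases x <;> fin_cases y <;> simp_all
  · simp

theorem det_eq_det_blocks {m : ℕ} (a : Fin (m + 2)) (b' : Fin (m + 1))
    (N : Matrix (Fin (m + 2)) (Fin (m + 2)) R) :
    N.det = (fromBlocks
        (N.submatrix (a.succAbove ∘ b'.succAbove) (a.succAbove ∘ b'.succAbove))
        (N.submatrix (a.succAbove ∘ b'.succAbove) ![a, a.succAbove b'])
        (N.submatrix ![a, a.succAbove b'] (a.succAbove ∘ b'.succAbove))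
        (N.submatrix ![a, a.succAbove b'] ![a, a.succAbove b'])).det := by
  rw [← det_submatrix_equiv_self (twoSplit a b') N]
  congr 1
  ext x y
  cases x <;> cases y <;> rfl

private lemma dj_mul {m : ℕ} (M : Matrix (Fin (m + 2)) (Fin (m + 2)) R)
    (a : Fin (m + 2)) (b' : Fin (m + 1)) :
    M.det * (M.adjugate a a * M.adjugate (a.succAbove b') (a.succAbove b')
        - M.adjugate a (a.succAbove b') * M.adjugate (a.succAbove b') a)
      = M.det * (M.det *
        (M.submatrix (a.succAbove ∘ b'.succAbove) (a.succAbove ∘ b'.succAbove)).det) := by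
  set b := a.succAbove b' with hbdef
  set s : Fin m → Fin (m + 2) := a.succAbove ∘ b'.succAbove with hsdef
  have hsa : ∀ x, s x ≠ a := fun x => Fin.succAbove_ne a _
  have hsb : ∀ x, s x ≠ b :=
    fun x h => Fin.succAbove_ne b' x ((Fin.strictMono_succAbove a).injective h)
  have hsinj : Function.Injective s :=
    ((Fin.strictMono_succAbove a).comp (Fin.strictMono_succAbove b')).injective
  have hab : a ≠ b := (Fin.succAbove_ne a b').symm
  set t : Fin 2 → Fin (m + 2) := ![a, b] with htdef
  have ht0 : t 0 = a := rfl
  have ht1 : t 1 = b := rfl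
  have hts : ∀ (x : Fin 2) (y : Fin m), t x ≠ s y := by
    intro x y
    fin_cases x
    · exact fun h => hsa y h.symm
    · exact fun h => hsb y h.symm
  have htinj : Function.Injective t := by
    intro x y h
    fin_cases x <;> fin_cases y <;> simp_all
  set P : Matrix (Fin (m + 2)) (Fin (m + 2)) R :=
    Matrix.of (fun r c => if c = a then M.adjugate r a else if c = b then M.adjugate r b
      else (1 : Matrix (Fin (m + 2)) (Fin (m + 2)) R) r c) with hPdef
  have hPa : ∀ r, P r a = M.adjugate r a := fun r => by simp [hPdef]
  have hPb : ∀ r, P r b = M.adjugate r b := fun r => by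
    simp [hPdef, Ne.symm hab]
  have hPo : ∀ r c, c ≠ a → c ≠ b →
      P r c = (1 : Matrix (Fin (m + 2)) (Fin (m + 2)) R) r c := by
    intro r c h1 h2; simp [hPdef, h1, h2]
  -- determinant of P
  have hdetP : P.det = M.adjugate a a * M.adjugate b b
      - M.adjugate a b * M.adjugate b a := by
    rw [det_eq_det_blocks a b' P]
    have h11 : P.submatrix s s = 1 := by
      ext x y
      rw [submatrix_apply, hPo _ _ (hsa y) (hsb y)]
      by_cases hxy : x = y
      · subst hxy; simp [Matrix.one_apply]
      · rw [Matrix.one_apply_ne hxy, Matrix.one_apply_ne (fun h => hxy (hsinj h))]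
    have h21 : P.submatrix t s = 0 := by
      ext x y
      rw [submatrix_apply, hPo _ _ (hsa y) (hsb y), Matrix.zero_apply,
        Matrix.one_apply_ne (hts x y)]
    rw [h11, h21, det_fromBlocks_zero₂₁, det_one, one_mul, det_fin_two]
    simp [Matrix.cons_val_zero, Matrix.cons_val_one, Matrix.head_cons, ← hbdef, hPa, hPb]
  -- M * P
  have hMP : M * P = Matrix.of (fun r c => if c = a ∨ c = b
      then M.det * (1 : Matrix (Fin (m + 2)) (Fin (m + 2)) R) r c else M r c) := by
    ext r c
    rw [Matrix.mul_apply, Matrix.of_apply]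
    by_cases h1 : c = a
    · have hP' : ∀ x, P x c = M.adjugate x c := fun x => by rw [h1]; exact hPa x
      rw [if_pos (Or.inl h1)]
      rw [show (∑ x, M r x * P x c) = ∑ x, M r x * M.adjugate x c from
          Finset.sum_congr rfl fun x _ => by rw [hP'],
        ← Matrix.mul_apply, Matrix.mul_adjugate]
      simp [Matrix.smul_apply]
    · by_cases h2 : c = b
      · have hP' : ∀ x, P x c = M.adjugate x c := fun x => by rw [h2]; exact hPb x
        rw [if_pos (Or.inr h2)]
        rw [show (∑ x, M r x * P x c) = ∑ x, M r x * M.adjugate x c from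
            Finset.sum_congr rfl fun x _ => by rw [hP'],
          ← Matrix.mul_apply, Matrix.mul_adjugate]
        simp [Matrix.smul_apply]
      · rw [if_neg (by tauto)]
        rw [show (∑ x, M r x * P x c)
              = ∑ x, M r x * (1 : Matrix (Fin (m + 2)) (Fin (m + 2)) R) x c from
            Finset.sum_congr rfl fun x _ => by rw [hPo _ _ h1 h2],
          ← Matrix.mul_apply, Matrix.mul_one]
  -- determinant of M * P
  have hdetMP : (M * P).det = (M.submatrix s s).det * (M.det * M.det) := by
    rw [hMP, det_eq_det_blocks a b' _]
    have h11 : (Matrix.of (fun r c => if c = a ∨ c = b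
        then M.det * (1 : Matrix (Fin (m + 2)) (Fin (m + 2)) R) r c else M r c)).submatrix s s
        = M.submatrix s s := by
      ext x y
      rw [submatrix_apply, Matrix.of_apply, if_neg (by
        rintro (h | h); exacts [hsa y h, hsb y h]), submatrix_apply]
    have h12 : (Matrix.of (fun r c => if c = a ∨ c = b
        then M.det * (1 : Matrix (Fin (m + 2)) (Fin (m + 2)) R) r c else M r c)).submatrix s t
        = 0 := by
      ext x y
      have hy : t y = a ∨ t y = b := by fin_cases y; exacts [Or.inl rfl, Or.inr rfl]
      rw [submatrix_apply, Matrix.of_apply, if_pos hy, Matrix.zero_apply,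
        Matrix.one_apply_ne (fun h => hts y x h.symm), mul_zero]
    have h22 : (Matrix.of (fun r c => if c = a ∨ c = b
        then M.det * (1 : Matrix (Fin (m + 2)) (Fin (m + 2)) R) r c else M r c)).submatrix t t
        = M.det • (1 : Matrix (Fin 2) (Fin 2) R) := by
      ext x y
      have hy : t y = a ∨ t y = b := by fin_cases y; exacts [Or.inl rfl, Or.inr rfl]
      rw [submatrix_apply, Matrix.of_apply, if_pos hy, Matrix.smul_apply, smul_eq_mul]
      congr 1
      by_cases hxy : x = y
      · subst hxy; simp [Matrix.one_apply]
      · rw [Matrix.one_apply_ne (fun h => hxy (htinj h)), Matrix.one_apply_ne hxy]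
    rw [h11, h12, h22, det_fromBlocks_zero₁₂, det_smul, det_one, Fintype.card_fin]
    ring
  calc M.det * (M.adjugate a a * M.adjugate b b - M.adjugate a b * M.adjugate b a)
      = M.det * P.det := by rw [hdetP]
    _ = (M * P).det := (det_mul M P).symm
    _ = (M.submatrix s s).det * (M.det * M.det) := hdetMP
    _ = M.det * (M.det * (M.submatrix s s).det) := by ring

private lemma dj_adjugate {m : ℕ} (a : Fin (m + 2)) (b' : Fin (m + 1))
    {R : Type*} [CommRing R] (M : Matrix (Fin (m + 2)) (Fin (m + 2)) R) :
    M.adjugate a a * M.adjugate (a.succAbove b') (a.succAbove b')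
        - M.adjugate a (a.succAbove b') * M.adjugate (a.succAbove b') a
      = M.det *
        (M.submatrix (a.succAbove ∘ b'.succAbove) (a.succAbove ∘ b'.succAbove)).det := by
  let A' := mvPolynomialX (Fin (m + 2)) (Fin (m + 2)) ℤ
  have key : A'.adjugate a a * A'.adjugate (a.succAbove b') (a.succAbove b')
        - A'.adjugate a (a.succAbove b') * A'.adjugate (a.succAbove b') a
      = A'.det *
        (A'.submatrix (a.succAbove ∘ b'.succAbove) (a.succAbove ∘ b'.succAbove)).det := by
    apply mul_left_cancel₀ (det_mvPolynomialX_ne_zero (Fin (m + 2)) ℤ)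
    exact dj_mul A' a b'
  let ψ : MvPolynomial ((Fin (m + 2)) × (Fin (m + 2))) ℤ →ₐ[ℤ] R :=
    MvPolynomial.aeval fun p : (Fin (m + 2)) × (Fin (m + 2)) => M p.1 p.2
  have hψ : ψ.mapMatrix A' = M := mvPolynomialX_mapMatrix_aeval ℤ M
  have h1 : ∀ x y : Fin (m + 2), M.adjugate x y = ψ (A'.adjugate x y) := by
    intro x y
    rw [← hψ, ← AlgHom.map_adjugate, AlgHom.mapMatrix_apply, Matrix.map_apply]
  have h2 : M.det = ψ A'.det := by rw [← hψ]; exact (AlgHom.map_det ψ A').symm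
  have h3 : (M.submatrix (a.succAbove ∘ b'.succAbove) (a.succAbove ∘ b'.succAbove)).det
      = ψ ((A'.submatrix (a.succAbove ∘ b'.succAbove) (a.succAbove ∘ b'.succAbove)).det) := by
    rw [← hψ, AlgHom.mapMatrix_apply, Matrix.submatrix_map, ← AlgHom.mapMatrix_apply,
      ← AlgHom.map_det]
  rw [h1, h1, h1, h1, h2, h3, ← _root_.map_mul, ← _root_.map_mul, ← _root_.map_sub,
    ← _root_.map_mul]
  exact congrArg ψ key

/-- The Desnanot–Jacobi identity. -/
theorem desnanot_jacobi {m : ℕ} (M : Matrix (Fin (m + 2)) (Fin (m + 2)) R)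
    (a : Fin (m + 2)) (b' : Fin (m + 1)) :
    (M.submatrix a.succAbove a.succAbove).det
        * (M.submatrix (a.succAbove b').succAbove (a.succAbove b').succAbove).det
      - M.det *
        (M.submatrix (a.succAbove ∘ b'.succAbove) (a.succAbove ∘ b'.succAbove)).det
      = (M.submatrix (a.succAbove b').succAbove a.succAbove).det
        * (M.submatrix a.succAbove (a.succAbove b').succAbove).det := by
  have h := dj_adjugate a b' M
  set b := a.succAbove b'
  rw [adjugate_fin_succ_eq_det_submatrix M a a, adjugate_fin_succ_eq_det_submatrix M b b,
    adjugate_fin_succ_eq_det_submatrix M a b, adjugate_fin_succ_eq_det_submatrix M b a] at h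
  have e1 : ((-1 : R) ^ ((a : ℕ) + a)) * ((-1 : R) ^ ((b : ℕ) + b)) = 1 := by
    rw [← pow_add]
    exact Even.neg_one_pow ⟨(a : ℕ) + (b : ℕ), by ring⟩
  have e2 : ((-1 : R) ^ ((b : ℕ) + a)) * ((-1 : R) ^ ((a : ℕ) + b)) = 1 := by
    rw [← pow_add]
    exact Even.neg_one_pow ⟨(a : ℕ) + (b : ℕ), by ring⟩
  calc (M.submatrix a.succAbove a.succAbove).det
        * (M.submatrix b.succAbove b.succAbove).det
      - M.det *
        (M.submatrix (a.succAbove ∘ b'.succAbove) (a.succAbove ∘ b'.succAbove)).det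
      = (((-1 : R) ^ ((a : ℕ) + a)) * ((-1 : R) ^ ((b : ℕ) + b)))
          * ((M.submatrix a.succAbove a.succAbove).det
            * (M.submatrix b.succAbove b.succAbove).det)
        - M.det *
          (M.submatrix (a.succAbove ∘ b'.succAbove) (a.succAbove ∘ b'.succAbove)).det := by
        rw [e1, one_mul]
    _ = (((-1 : R) ^ ((b : ℕ) + a)) * ((-1 : R) ^ ((a : ℕ) + b)))
          * ((M.submatrix b.succAbove a.succAbove).det
            * (M.submatrix a.succAbove b.succAbove).det) := by
        rw [← sub_eq_zero]
        have := h
        ring_nf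
        ring_nf at this
        linear_combination this
    _ = (M.submatrix b.succAbove a.succAbove).det
          * (M.submatrix a.succAbove b.succAbove).det := by rw [e2, one_mul]

end DJ

/-! ### Application layer -/

lemma minorDet_eq_det {ι R : Type*} [Fintype ι] [DecidableEq ι] [LinearOrder ι]
    [CommRing R] (M : Matrix ι ι R) (s t : Finset ι) {r : ℕ}
    (hs : s.card = r) (ht : t.card = r) (f g : Fin r → ι)
    (hf : StrictMono f) (hg : StrictMono g)
    (hfs : ∀ x, f x ∈ s) (hgt : ∀ x, g x ∈ t) :
    minorDet M s t = (M.submatrix f g).det := by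
  subst hs
  rw [minorDet, dif_pos ht, ← Finset.orderEmbOfFin_unique rfl hfs hf,
    ← Finset.orderEmbOfFin_unique ht hgt hg]

lemma card_liftWithZero {n : ℕ} (Γ : Finset (Fin n)) :
    (liftWithZero Γ).card = Γ.card + 1 := by
  rw [liftWithZero, Finset.card_insert_of_notMem (by simp [Fin.succ_ne_zero]),
    Finset.card_image_of_injective _ (Fin.succ_injective n)]

lemma mem_liftWithZero {n : ℕ} {Γ : Finset (Fin n)} {x : Fin (n + 1)} :
    x ∈ liftWithZero Γ ↔ x = 0 ∨ ∃ y ∈ Γ, y.succ = x := by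
  simp [liftWithZero]

/-- Face conic identity: S_{Ω∪{k}}·S_{Ω∪{j}} − S_Ω·S_{Ω∪{j,k}} = (H_{Ω,j,k})²,
where S_Γ is the symmetric subdeterminant of the Penrose matrix on rows and
columns Γ∪{0} and the face conic H_{Ω,j,k} is the subdeterminant with rows
Ω∪{0,j} and columns Ω∪{0,k}. -/
theorem penrose_face_conic_identity
    (n : ℕ) (S₀ : MvPolynomial (Fin 3) ℝ) (hS₀ : S₀.IsHomogeneous 2)
    (p : Fin n → MvPolynomial (Fin 3) ℝ) (hp : ∀ i, (p i).IsHomogeneous 1)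
    (A : Matrix (Fin n) (Fin n) ℝ) (hA : A.IsSymm)
    (Ω : Finset (Fin n)) (j k : Fin n) (hjk : j ≠ k)
    (hj : j ∉ Ω) (hk : k ∉ Ω) :
    minorDet (penroseMatrix n S₀ p A) (liftWithZero (insert k Ω))
        (liftWithZero (insert k Ω))
      * minorDet (penroseMatrix n S₀ p A) (liftWithZero (insert j Ω))
        (liftWithZero (insert j Ω))
    - minorDet (penroseMatrix n S₀ p A) (liftWithZero Ω) (liftWithZero Ω)
      * minorDet (penroseMatrix n S₀ p A) (liftWithZero (insert j (insert k Ω)))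
          (liftWithZero (insert j (insert k Ω)))
    = (minorDet (penroseMatrix n S₀ p A)
        (insert j.succ (liftWithZero Ω)) (insert k.succ (liftWithZero Ω))) ^ 2 := by
  classical
  set P := penroseMatrix n S₀ p A with hPdef
  -- symmetry of the Penrose matrix
  have hPsymm : Pᵀ = P := by
    ext x y
    rw [transpose_apply]
    induction x using Fin.cases with
    | zero => induction y using Fin.cases with
      | zero => rfl
      | succ y' => simp [hPdef, penroseMatrix]
    | succ x' => induction y using Fin.cases with
      | zero => simp [hPdef, penroseMatrix]
      | succ y' => simp [hPdef, penroseMatrix, hA.apply]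
  set c := Ω.card with hc
  set T : Finset (Fin (n + 1)) := liftWithZero (insert j (insert k Ω)) with hT
  have hjkΩ : j ∉ insert k Ω := by simp [hjk, hj]
  have hTcard : T.card = c + 1 + 2 := by
    rw [hT, card_liftWithZero, Finset.card_insert_of_notMem hjkΩ,
      Finset.card_insert_of_notMem hk]
  set F := T.orderEmbOfFin hTcard with hF
  obtain ⟨a, ha⟩ : ∃ a, F a = j.succ := by
    have : j.succ ∈ Set.range F := by
      rw [hF, Finset.range_orderEmbOfFin]
      exact_mod_cast mem_liftWithZero.2 (Or.inr ⟨j, by simp, rfl⟩)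
    exact this
  obtain ⟨b, hb⟩ : ∃ b, F b = k.succ := by
    have : k.succ ∈ Set.range F := by
      rw [hF, Finset.range_orderEmbOfFin]
      exact_mod_cast mem_liftWithZero.2 (Or.inr ⟨k, by simp, rfl⟩)
    exact this
  have hab : b ≠ a := by
    intro h
    apply hjk
    have h2 : k.succ = j.succ := by rw [← hb, ← ha, h]
    exact (Fin.succ_injective n h2).symm
  obtain ⟨b', hb'⟩ : ∃ b'', a.succAbove b'' = b := Fin.exists_succAbove_eq hab
  set N : Matrix (Fin (c + 1 + 2)) (Fin (c + 1 + 2)) (MvPolynomial (Fin 3) ℝ) :=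
    P.submatrix F F with hN
  have hNsymm : Nᵀ = N := by rw [hN, transpose_submatrix, hPsymm]
  have hFinj : Function.Injective F := F.injective
  have hFmem : ∀ x, F x ∈ T := fun x => Finset.orderEmbOfFin_mem T hTcard x
  -- membership helpers
  have hmemT : ∀ y : Fin (n + 1), y ∈ T ↔
      y = 0 ∨ y = j.succ ∨ y = k.succ ∨ ∃ z ∈ Ω, z.succ = y := by
    intro y
    rw [hT, mem_liftWithZero]
    constructor
    · rintro (h | ⟨z, hz, rfl⟩)
      · exact Or.inl h
      · simp only [Finset.mem_insert] at hz
        rcases hz with rfl | rfl | hz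
        exacts [Or.inr (Or.inl rfl), Or.inr (Or.inr (Or.inl rfl)),
          Or.inr (Or.inr (Or.inr ⟨z, hz, rfl⟩))]
    · rintro (h | h | h | ⟨z, hz, rfl⟩)
      · exact Or.inl h
      · exact Or.inr ⟨j, by simp, h.symm⟩
      · exact Or.inr ⟨k, by simp, h.symm⟩
      · exact Or.inr ⟨z, by simp [hz], rfl⟩
  have hsubk : ∀ y : Fin (n + 1), y ∈ T → y ≠ j.succ → y ∈ liftWithZero (insert k Ω) := by
    intro y hy hne
    rcases (hmemT y).1 hy with h | h | h | ⟨z, hz, rfl⟩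
    · exact mem_liftWithZero.2 (Or.inl h)
    · exact absurd h hne
    · exact mem_liftWithZero.2 (Or.inr ⟨k, by simp, h.symm⟩)
    · exact mem_liftWithZero.2 (Or.inr ⟨z, by simp [hz], rfl⟩)
  have hsubj : ∀ y : Fin (n + 1), y ∈ T → y ≠ k.succ → y ∈ liftWithZero (insert j Ω) := by
    intro y hy hne
    rcases (hmemT y).1 hy with h | h | h | ⟨z, hz, rfl⟩
    · exact mem_liftWithZero.2 (Or.inl h)
    · exact mem_liftWithZero.2 (Or.inr ⟨j, by simp, h.symm⟩)
    · exact absurd h hne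
    · exact mem_liftWithZero.2 (Or.inr ⟨z, by simp [hz], rfl⟩)
  have hsub0 : ∀ y : Fin (n + 1), y ∈ T → y ≠ j.succ → y ≠ k.succ →
      y ∈ liftWithZero Ω := by
    intro y hy hne1 hne2
    rcases (hmemT y).1 hy with h | h | h | ⟨z, hz, rfl⟩
    · exact mem_liftWithZero.2 (Or.inl h)
    · exact absurd h hne1
    · exact absurd h hne2
    · exact mem_liftWithZero.2 (Or.inr ⟨z, hz, rfl⟩)
  have hsubVj : ∀ y : Fin (n + 1), y ∈ T → y ≠ k.succ →
      y ∈ insert j.succ (liftWithZero Ω) := by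
    intro y hy hne
    rcases (hmemT y).1 hy with h | h | h | ⟨z, hz, rfl⟩
    · exact Finset.mem_insert.2 (Or.inr (mem_liftWithZero.2 (Or.inl h)))
    · exact Finset.mem_insert.2 (Or.inl h)
    · exact absurd h hne
    · exact Finset.mem_insert.2 (Or.inr (mem_liftWithZero.2 (Or.inr ⟨z, hz, rfl⟩)))
  have hsubVk : ∀ y : Fin (n + 1), y ∈ T → y ≠ j.succ →
      y ∈ insert k.succ (liftWithZero Ω) := by
    intro y hy hne
    rcases (hmemT y).1 hy with h | h | h | ⟨z, hz, rfl⟩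
    · exact Finset.mem_insert.2 (Or.inr (mem_liftWithZero.2 (Or.inl h)))
    · exact absurd h hne
    · exact Finset.mem_insert.2 (Or.inl h)
    · exact Finset.mem_insert.2 (Or.inr (mem_liftWithZero.2 (Or.inr ⟨z, hz, rfl⟩)))
  -- cardinalities
  have hcardk : (liftWithZero (insert k Ω)).card = c + 2 := by
    rw [card_liftWithZero, Finset.card_insert_of_notMem hk]
  have hcardj : (liftWithZero (insert j Ω)).card = c + 2 := by
    rw [card_liftWithZero, Finset.card_insert_of_notMem hj]
  have hcard0 : (liftWithZero Ω).card = c + 1 := card_liftWithZero Ω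
  have hjnot : j.succ ∉ liftWithZero Ω := by
    rw [mem_liftWithZero]
    rintro (h | ⟨z, hz, hzz⟩)
    · exact Fin.succ_ne_zero j h
    · exact hj ((Fin.succ_injective n hzz) ▸ hz)
  have hknot : k.succ ∉ liftWithZero Ω := by
    rw [mem_liftWithZero]
    rintro (h | ⟨z, hz, hzz⟩)
    · exact Fin.succ_ne_zero k h
    · exact hk ((Fin.succ_injective n hzz) ▸ hz)
  have hcardVj : (insert j.succ (liftWithZero Ω)).card = c + 2 := by
    rw [Finset.card_insert_of_notMem hjnot, hcard0]
  have hcardVk : (insert k.succ (liftWithZero Ω)).card = c + 2 := by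
    rw [Finset.card_insert_of_notMem hknot, hcard0]
  -- strict monotonicity helpers
  have hFsm : StrictMono F := F.strictMono
  have hfa : StrictMono (⇑F ∘ a.succAbove) := hFsm.comp (Fin.strictMono_succAbove a)
  have hfb : StrictMono (⇑F ∘ b.succAbove) := hFsm.comp (Fin.strictMono_succAbove b)
  have hfs : StrictMono (⇑F ∘ (a.succAbove ∘ b'.succAbove)) :=
    hFsm.comp ((Fin.strictMono_succAbove a).comp (Fin.strictMono_succAbove b'))
  have hsAa : Function.Injective a.succAbove := (Fin.strictMono_succAbove a).injective
  have hnej : ∀ x : Fin (c + 2), F (a.succAbove x) ≠ j.succ := by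
    intro x h
    rw [← ha] at h
    exact Fin.succAbove_ne a x (hFinj h)
  have hnek : ∀ x : Fin (c + 2), F (b.succAbove x) ≠ k.succ := by
    intro x h
    rw [← hb] at h
    exact Fin.succAbove_ne b x (hFinj h)
  have hne0j : ∀ x : Fin (c + 1), F (a.succAbove (b'.succAbove x)) ≠ j.succ := by
    intro x h
    rw [← ha] at h
    exact Fin.succAbove_ne a _ (hFinj h)
  have hne0k : ∀ x : Fin (c + 1), F (a.succAbove (b'.succAbove x)) ≠ k.succ := by
    intro x h
    rw [← hb, ← hb'] at h
    exact Fin.succAbove_ne b' x (hsAa (hFinj h))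
  -- rewrite the 6 minors
  have m1 : minorDet P (liftWithZero (insert k Ω)) (liftWithZero (insert k Ω))
      = (N.submatrix a.succAbove a.succAbove).det := by
    rw [minorDet_eq_det P _ _ hcardk hcardk (⇑F ∘ a.succAbove) (⇑F ∘ a.succAbove)
      hfa hfa (fun x => hsubk _ (hFmem _) (hnej x)) (fun x => hsubk _ (hFmem _) (hnej x))]
    rw [hN, submatrix_submatrix]
  have m2 : minorDet P (liftWithZero (insert j Ω)) (liftWithZero (insert j Ω))
      = (N.submatrix b.succAbove b.succAbove).det := by
    rw [minorDet_eq_det P _ _ hcardj hcardj (⇑F ∘ b.succAbove) (⇑F ∘ b.succAbove)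
      hfb hfb (fun x => hsubj _ (hFmem _) (hnek x)) (fun x => hsubj _ (hFmem _) (hnek x))]
    rw [hN, submatrix_submatrix]
  have hmem0 : ∀ x, F (a.succAbove (b'.succAbove x)) ∈ liftWithZero Ω :=
    fun x => hsub0 _ (hFmem _) (hne0j x) (hne0k x)
  have m3 : minorDet P (liftWithZero Ω) (liftWithZero Ω)
      = (N.submatrix (a.succAbove ∘ b'.succAbove) (a.succAbove ∘ b'.succAbove)).det := by
    rw [minorDet_eq_det P _ _ hcard0 hcard0 (⇑F ∘ (a.succAbove ∘ b'.succAbove))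
      (⇑F ∘ (a.succAbove ∘ b'.succAbove)) hfs hfs hmem0 hmem0]
    rw [hN, submatrix_submatrix]
  have m4 : minorDet P T T = N.det := by
    rw [minorDet_eq_det P _ _ hTcard hTcard ⇑F ⇑F hFsm hFsm hFmem hFmem, hN]
  have m5 : minorDet P (insert j.succ (liftWithZero Ω)) (insert k.succ (liftWithZero Ω))
      = (N.submatrix b.succAbove a.succAbove).det := by
    rw [minorDet_eq_det P _ _ hcardVj hcardVk (⇑F ∘ b.succAbove) (⇑F ∘ a.succAbove)
      hfb hfa (fun x => hsubVj _ (hFmem _) (hnek x)) (fun x => hsubVk _ (hFmem _) (hnej x))]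
    rw [hN, submatrix_submatrix]
  rw [m1, m2, m3, m4, m5]
  have hsym2 : (N.submatrix a.succAbove b.succAbove).det
      = (N.submatrix b.succAbove a.succAbove).det := by
    rw [← det_transpose (N.submatrix a.succAbove b.succAbove), transpose_submatrix, hNsymm]
  have hdj := desnanot_jacobi N a b'
  rw [hb'] at hdj
  have hsq : (N.submatrix b.succAbove a.succAbove).det * (N.submatrix b.succAbove a.succAbove).det
      = (N.submatrix b.succAbove a.succAbove).det * (N.submatrix a.succAbove b.succAbove).det := by
    rw [hsym2]
  rw [sq, hsq]
  linear_combination hdj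
end
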